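/- Fix integers V ≥ 2 and d ≥ 1, identify the alphabet with Fin V with a distinguished mask symbol M, and for t > 0 let K_t be the masking channel on Fin V given by K_t(·|M) = δ_M and, for x ≠ M, K_t(y|x) = e^{−t} δ_{y=x} + (1 − e^{−t}) δ_{y=M}. Let q_0 be any probability mass function on (Fin V)^d, and let q_t be the corrupted distribution q_t(y) = Σ_{x ∈ (Fin V)^d} q_0(x) ∏_{i=1}^d K_t(y_i | x_i). Let p_init be the product distribution on (Fin V)^d whose every coordinate is ν_{e^{−t}}, where ν_ε(M) = 1 − ε and ν_ε(j) = ε/(V−1) for j ≠ M. Then KL(q_t ‖ p_init) ≤ Σ_{i=1}^d [ P_{x∼q_0}(x_i ≠ M) · e^{−t} log(V−1) + P_{x∼q_0}(x_i = M) · (−log(1 − e^{−t})) ]. -/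

import Mathlib

/-!
Since `v ↦ v log (v / c)` is convex, `KL(q_t ‖ p_init)` is at most the `q_0`-average of
`KL(⊗ᵢ K_t(· | xᵢ) ‖ ν^{⊗d})`. Divergences of product distributions add up over the factors,
and a single token contributes `-log (1 - e⁻ᵗ)` if it is masked and `e⁻ᵗ log (V - 1)` otherwise.
-/

open Finset

/-- The masking channel of a masked diffusion model at time `t`: a mask token stays
masked; a non-mask token `x` survives with probability `e⁻ᵗ` and is replaced by the
mask symbol `M` with probability `1 - e⁻ᵗ`. -/
noncomputable def maskKernel (V : ℕ) (M : Fin V) (t : ℝ) (x y : Fin V) : ℝ :=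
  if x = M then (if y = M then 1 else 0)
  else if y = x then Real.exp (-t) else if y = M then 1 - Real.exp (-t) else 0

/-- The non-stationary per-token initialization distribution of Assumption A.1:
mass `1 - ε` on the mask symbol and mass `ε` spread uniformly over the other
`V - 1` symbols. -/
noncomputable def nuEps (V : ℕ) (M : Fin V) (ε : ℝ) (y : Fin V) : ℝ :=
  if y = M then 1 - ε else ε / ((V : ℝ) - 1)

open Real

/-- Kullback–Leibler divergence on a finite type; `Real.log 0 = 0` gives the convention
`0 * log (0 / a) = 0`. -/
noncomputable def finKLDiv {β : Type*} [Fintype β] (p q : β → ℝ) : ℝ :=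
  ∑ y, p y * log (p y / q y)

theorem convexOn_mul_log_div {c : ℝ} (hc : c ≠ 0) :
    ConvexOn ℝ (Set.Ici 0) fun v => v * log (v / c) := by
  refine (convexOn_mul_log.add ((LinearMap.mul ℝ ℝ (-log c)).convexOn (convex_Ici 0))).congr ?_
  intro v hv
  rcases (Set.mem_Ici.mp hv).eq_or_lt with rfl | hv
  · simp
  · simp only [Pi.add_apply, LinearMap.mul_apply', Real.log_div hv.ne' hc]
    ring

theorem finKLDiv_mixture_le {α β : Type*} [Fintype α] [Fintype β] {w : α → ℝ}
    (hw0 : ∀ x, 0 ≤ w x) (hw1 : ∑ x, w x = 1) {p : α → β → ℝ} (hp : ∀ x y, 0 ≤ p x y)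
    {q : β → ℝ} (hq : ∀ y, q y ≠ 0) :
    finKLDiv (fun y => ∑ x, w x * p x y) q ≤ ∑ x, w x * finKLDiv (p x) q := by
  simp only [finKLDiv, Finset.mul_sum]
  rw [Finset.sum_comm]
  gcongr with y
  exact (convexOn_mul_log_div (hq y)).map_sum_le (fun x _ => hw0 x) hw1 fun x _ => hp x y

section Product

variable {ι β : Type*} [Fintype ι] [DecidableEq ι] [Fintype β]

theorem sum_prod_mul_apply {p : ι → β → ℝ} {i : ι} (hp : ∀ j ≠ i, ∑ z, p j z = 1)
    (f : β → ℝ) :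
    ∑ y : ι → β, (∏ j, p j (y j)) * f (y i) = ∑ z, p i z * f z := by
  have hfactor : ∀ y : ι → β,
      (∏ j, p j (y j)) * f (y i) = ∏ j, p j (y j) * (if j = i then f (y j) else 1) := by
    intro y
    rw [Finset.prod_mul_distrib, Finset.prod_ite_eq' univ i, if_pos (mem_univ i)]
  simp only [hfactor, ← Fintype.prod_sum (fun j z => p j z * (if j = i then f z else 1))]
  rw [Finset.prod_eq_single i (fun j _ hj => by simp [hj, hp j hj]) (by simp)]
  simp

theorem finKLDiv_pi {p q : ι → β → ℝ} (hp : ∀ i, ∑ z, p i z = 1) (hq : ∀ i z, q i z ≠ 0) :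
    finKLDiv (fun y : ι → β => ∏ i, p i (y i)) (fun y => ∏ i, q i (y i)) =
      ∑ i, finKLDiv (p i) (q i) := by
  have hlog : ∀ y : ι → β, (∏ i, p i (y i)) * log ((∏ i, p i (y i)) / ∏ i, q i (y i)) =
      ∑ i, (∏ j, p j (y j)) * log (p i (y i) / q i (y i)) := by
    intro y
    rw [← Finset.mul_sum]
    by_cases h0 : ∏ i, p i (y i) = 0
    · simp [h0]
    · rw [← Finset.prod_div_distrib, Real.log_prod fun i _ =>
        div_ne_zero (Finset.prod_ne_zero_iff.mp h0 i (mem_univ i)) (hq i (y i))]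
  simp only [finKLDiv, hlog]
  rw [Finset.sum_comm]
  exact Finset.sum_congr rfl fun i _ =>
    sum_prod_mul_apply (fun j _ => hp j) fun z => log (p i z / q i z)

end Product

section Masking

variable {V : ℕ} (M : Fin V)

theorem maskKernel_nonneg {t : ℝ} (ht : 0 ≤ t) (x y : Fin V) : 0 ≤ maskKernel V M t x y := by
  have : exp (-t) ≤ 1 := exp_le_one_iff.mpr (by linarith)
  unfold maskKernel
  split_ifs <;> linarith [exp_pos (-t)]

theorem sum_maskKernel (t : ℝ) (x : Fin V) : ∑ y, maskKernel V M t x y = 1 := by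
  by_cases hx : x = M
  · simp [maskKernel, hx]
  · rw [Fintype.sum_eq_add x M hx fun y hy => by simp [maskKernel, hx, hy.1, hy.2]]
    simp [maskKernel, hx, Ne.symm hx]

theorem nuEps_pos (hV : 1 < V) {ε : ℝ} (hε0 : 0 < ε) (hε1 : ε < 1) (y : Fin V) :
    0 < nuEps V M ε y := by
  have : (1 : ℝ) < V := by exact_mod_cast hV
  unfold nuEps
  split_ifs
  · linarith
  · exact div_pos hε0 (by linarith)

theorem finKLDiv_maskKernel_nuEps (t : ℝ) (x : Fin V) :
    finKLDiv (maskKernel V M t x) (nuEps V M (exp (-t))) =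
      if x = M then -log (1 - exp (-t)) else exp (-t) * log ((V : ℝ) - 1) := by
  unfold finKLDiv
  by_cases hx : x = M
  · subst hx
    rw [Fintype.sum_eq_single x fun y hy => by simp [maskKernel, hy]]
    simp [maskKernel, nuEps]
  · rw [Fintype.sum_eq_add x M hx fun y hy => by simp [maskKernel, hx, hy.1, hy.2]]
    have hsurvive : exp (-t) / (exp (-t) / ((V : ℝ) - 1)) = (V : ℝ) - 1 :=
      div_div_cancel₀ (exp_pos _).ne'
    have hmask : log ((1 - exp (-t)) / (1 - exp (-t))) = 0 := by
      rcases eq_or_ne (1 - exp (-t)) 0 with h | h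
      · simp [h]
      · simp [div_self h]
    simp [maskKernel, nuEps, hx, Ne.symm hx, hsurvive, hmask]

end Masking

theorem sum_mul_sum_ite {α ι : Type*} [Fintype α] [Fintype ι] (w : α → ℝ)
    (P : ι → α → Prop) [∀ i, DecidablePred (P i)] (a b : ℝ) :
    ∑ x, w x * ∑ i, (if P i x then a else b) =
      ∑ i, ((∑ x ∈ univ.filter (fun x => ¬P i x), w x) * b +
        (∑ x ∈ univ.filter (P i), w x) * a) := by
  simp only [Finset.mul_sum, mul_ite]
  rw [Finset.sum_comm]
  refine Finset.sum_congr rfl fun i _ => ?_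
  rw [Finset.sum_ite, add_comm, Finset.sum_mul, Finset.sum_mul]

theorem kl_corrupted_le_tokenwise_sum_general
    {V d : ℕ} (hV : 2 ≤ V) (M : Fin V) (t : ℝ) (ht : 0 < t)
    (q0 : (Fin d → Fin V) → ℝ)
    (hq00 : ∀ x, 0 ≤ q0 x) (hq01 : ∑ x, q0 x = 1) :
    ∑ y : Fin d → Fin V,
        (∑ x, q0 x * ∏ i, maskKernel V M t (x i) (y i)) *
          Real.log ((∑ x, q0 x * ∏ i, maskKernel V M t (x i) (y i)) /
            ∏ i, nuEps V M (Real.exp (-t)) (y i)) ≤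
      ∑ i : Fin d,
        ((∑ x ∈ Finset.univ.filter (fun x : Fin d → Fin V => x i ≠ M), q0 x) *
            (Real.exp (-t) * Real.log ((V : ℝ) - 1)) +
          (∑ x ∈ Finset.univ.filter (fun x : Fin d → Fin V => x i = M), q0 x) *
            (-Real.log (1 - Real.exp (-t)))) := by
  have hν : ∀ z, nuEps V M (exp (-t)) z ≠ 0 := fun z =>
    (nuEps_pos M hV (exp_pos _) (exp_lt_one_iff.mpr (by linarith)) z).ne'
  calc finKLDiv (fun y : Fin d → Fin V => ∑ x, q0 x * ∏ i, maskKernel V M t (x i) (y i))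
        (fun y => ∏ i, nuEps V M (exp (-t)) (y i))
      ≤ ∑ x, q0 x * finKLDiv (fun y : Fin d → Fin V => ∏ i, maskKernel V M t (x i) (y i))
          (fun y => ∏ i, nuEps V M (exp (-t)) (y i)) :=
        finKLDiv_mixture_le hq00 hq01
          (fun x y => prod_nonneg fun i _ => maskKernel_nonneg M ht.le _ _)
          fun y => prod_ne_zero_iff.mpr fun i _ => hν _
    _ = ∑ x, q0 x * ∑ i, finKLDiv (maskKernel V M t (x i)) (nuEps V M (exp (-t))) := by
        simp only [finKLDiv_pi (fun i => sum_maskKernel M t _) fun _ => hν]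
    _ = _ := by
        simp only [finKLDiv_maskKernel_nuEps]
        exact sum_mul_sum_ite q0 (fun i x => x i = M) _ _

/-- Penultimate inequality of Lemma A.2: the KL divergence between the
token-wise corrupted distribution `q_t` and the product initialization
`p_init = ν_{e⁻ᵗ}^{⊗ d}` is bounded by the sum over positions of the
probability-weighted per-token divergences. -/
theorem kl_corrupted_le_tokenwise_sum
    {V d : ℕ} (hV : 2 ≤ V) (hd : 1 ≤ d) (M : Fin V) (t : ℝ) (ht : 0 < t)
    (q0 : (Fin d → Fin V) → ℝ)
    (hq00 : ∀ x, 0 ≤ q0 x) (hq01 : ∑ x, q0 x = 1) :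
    ∑ y : Fin d → Fin V,
        (∑ x, q0 x * ∏ i, maskKernel V M t (x i) (y i)) *
          Real.log ((∑ x, q0 x * ∏ i, maskKernel V M t (x i) (y i)) /
            ∏ i, nuEps V M (Real.exp (-t)) (y i)) ≤
      ∑ i : Fin d,
        ((∑ x ∈ Finset.univ.filter (fun x : Fin d → Fin V => x i ≠ M), q0 x) *
            (Real.exp (-t) * Real.log ((V : ℝ) - 1)) +
          (∑ x ∈ Finset.univ.filter (fun x : Fin d → Fin V => x i = M), q0 x) *
            (-Real.log (1 - Real.exp (-t)))) :=
  kl_corrupted_le_tokenwise_sum_general hV M t ht q0 hq00 hq01
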